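/- For the prediction-method iteration on L(u,v) = ⟨v,u⟩ in one dimension with steps α = β, given by u^{k+1} = u^k - αv^k, ū = 2u^{k+1} - u^k, v^{k+1} = v^k + αū, the iteration map is T(u,v) = (u - αv, v + α((u-αv) + ((u-αv)-u))) = (u - αv, v + α(u - 2αv)), and for 0 < α < 1 both eigenvalues of the linear map T have modulus strictly less than 1, so T^k(u,v) → (0,0) for every initial point. -/

import Mathlib

open Filter

private lemma aux_sq_tendsto (s C : ℝ) (hs0 : 0 ≤ s) (hs1 : s < 1) (x : ℕ → ℝ)
    (hx : ∀ k, (x k) ^ 2 ≤ C * s ^ k) : Tendsto x atTop (nhds 0) := by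
  have hg : Tendsto (fun k : ℕ => Real.sqrt (C * s ^ k)) atTop (nhds 0) := by
    have h1 : Tendsto (fun k : ℕ => C * s ^ k) atTop (nhds 0) := by
      simpa using (tendsto_pow_atTop_nhds_zero_of_lt_one hs0 hs1).const_mul C
    simpa using h1.sqrt
  refine squeeze_zero_norm (fun k => ?_) hg
  rw [Real.norm_eq_abs, ← Real.sqrt_sq_eq_abs]
  exact Real.sqrt_le_sqrt (hx k)

/-- For `0 < α < 1`, one step of the prediction method on
`L(u,v) = uv` with equal learning rates, `T(u,v) = (u - αv, αu + (1-2α²)v)`,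
has spectral radius strictly less than 1, so `T^k(u,v) → (0,0)` for every
initial point. -/
theorem stmt_16 (α : ℝ) (hα0 : 0 < α) (hα1 : α < 1)
    (T : ℝ × ℝ → ℝ × ℝ)
    (hT : ∀ p, T p = (p.1 - α * p.2, α * p.1 + (1 - 2 * α ^ 2) * p.2)) :
    (∀ μ ∈ spectrum ℂ ((Matrix.of ![![1, -α], ![α, 1 - 2 * α ^ 2]]).map
        (Complex.ofReal)), ‖μ‖ < 1) ∧
      ∀ p : ℝ × ℝ, Tendsto (fun k => T^[k] p) atTop (nhds (0, 0)) := by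
  have hs0 : (0:ℝ) < 1 - α ^ 2 := by nlinarith
  constructor
  · intro μ hμ
    rw [spectrum.mem_iff, Matrix.isUnit_iff_isUnit_det, isUnit_iff_ne_zero, not_not,
      Matrix.det_fin_two] at hμ
    simp [Matrix.algebraMap_matrix_apply] at hμ
    set s : ℝ := 1 - α ^ 2 with hs
    set c : ℝ := α * Real.sqrt s with hc
    have hc2 : c ^ 2 = α ^ 2 * s := by
      rw [hc, mul_pow, Real.sq_sqrt hs0.le]
    have key : (μ - s) ^ 2 = (Complex.I * c) ^ 2 := by
      have : ((c:ℂ)) ^ 2 = (α:ℂ) ^ 2 * s := by exact_mod_cast congrArg Complex.ofReal hc2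
      rw [mul_pow, Complex.I_sq, this]
      push_cast [hs]
      linear_combination hμ
    have hcases : μ = s + Complex.I * c ∨ μ = s - Complex.I * c := by
      rcases sq_eq_sq_iff_eq_or_eq_neg.mp key with h | h
      · left; linear_combination h
      · right; linear_combination h
    have hnorm : ‖μ‖ ^ 2 = s := by
      rcases hcases with h | h <;> subst h <;>
        · rw [Complex.sq_norm, Complex.normSq_apply]
          simp
          nlinarith [hc2]
    nlinarith [norm_nonneg μ, hnorm]
  · intro p
    set s : ℝ := 1 - α ^ 2 with hs
    set q : ℝ × ℝ → ℝ := fun r => s * r.1 ^ 2 + (α * r.1 - r.2) ^ 2 with hqdef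
    have hstep : ∀ r, q (T r) = s * q r := by
      intro r
      rw [hT]
      simp only [hqdef, hs]
      ring
    have hqk : ∀ k, q (T^[k] p) = s ^ k * q p := by
      intro k
      induction k with
      | zero => simp
      | succ n ih =>
        rw [Function.iterate_succ_apply', hstep, ih, pow_succ]
        ring
    have hq0 : 0 ≤ q p := by positivity
    have h1 : Tendsto (fun k => (T^[k] p).1) atTop (nhds 0) := by
      refine aux_sq_tendsto s (q p / s) hs0.le (by nlinarith) _ (fun k => ?_)
      have h := hqk k
      rw [div_mul_eq_mul_div, le_div_iff₀ hs0]
      simp only [hqdef] at h ⊢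
      nlinarith [h, sq_nonneg (α * (T^[k] p).1 - (T^[k] p).2)]
    have h2 : Tendsto (fun k => (T^[k] p).2) atTop (nhds 0) := by
      refine aux_sq_tendsto s ((2 * α ^ 2 + 2 * s) * q p / s) hs0.le (by nlinarith) _
        (fun k => ?_)
      have h := hqk k
      rw [div_mul_eq_mul_div, le_div_iff₀ hs0]
      simp only [hqdef] at h ⊢
      nlinarith [h, mul_nonneg (sq_nonneg α) (sq_nonneg (α * (T^[k] p).1 - (T^[k] p).2)),
        mul_nonneg hs0.le (mul_nonneg hs0.le (sq_nonneg (T^[k] p).1)),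
        mul_nonneg hs0.le (sq_nonneg (2 * α * (T^[k] p).1 - (T^[k] p).2))]
    exact h1.prodMk_nhds h2
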